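/- Assume 2k + 1 ≤ n, A satisfies the (2k+1)-RIP (δ_{2k+1} < 1), and every column of A has unit Euclidean norm. Fix a set S* ⊆ {1,…,n} with |S*| = k and any e ∈ ℝ^m. Then there exists x* ∈ ℝⁿ with support exactly S* satisfying the recovery condition γ_k^RIP ‖e‖₂ < min_{i∈S*}|x*_i|/(2k) − α_k^RIP ‖x*‖₂ if and only if α_k^RIP < (1/2) k^{−3/2}. Moreover, when α_k^RIP < (1/2) k^{−3/2}, any vector x* that is equal to a constant c on S* and zero elsewhere satisfies the recovery condition whenever |c| > 2k γ_k^RIP ‖e‖₂ / (1 − 2 k^{3/2} α_k^RIP). -/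
import Mathlib


noncomputable section
open Finset Matrix

/-- Support of a vector as a finite set of indices. -/
def spt {d : ℕ} (x : Fin d → ℝ) : Finset (Fin d) :=
  Finset.univ.filter (fun i => x i ≠ 0)

/-- Euclidean (ℓ²) norm of a vector. -/
def l2norm {d : ℕ} (v : Fin d → ℝ) : ℝ :=
  Real.sqrt (∑ i, (v i) ^ 2)

/-- Sup (ℓ∞) norm of a vector. -/
def supNorm {d : ℕ} (v : Fin d → ℝ) : ℝ :=
  ⨆ i, |v i|

/-- The `l`-th restricted isometry constant of `A`: the smallest `δ ≥ 0` such that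
`(1-δ)‖x‖₂² ≤ ‖Ax‖₂² ≤ (1+δ)‖x‖₂²` for every `x` with at most `l` nonzero entries. -/
def ripConst {m n : ℕ} (A : Matrix (Fin m) (Fin n) ℝ) (l : ℕ) : ℝ :=
  sInf {δ : ℝ | 0 ≤ δ ∧ ∀ x : Fin n → ℝ, (spt x).card ≤ l →
    (1 - δ) * ∑ i, (x i) ^ 2 ≤ ∑ j, (A.mulVec x j) ^ 2 ∧
    ∑ j, (A.mulVec x j) ^ 2 ≤ (1 + δ) * ∑ i, (x i) ^ 2}

/-- `α_k^RIP = δ_{2k+1} (1 + δ_{2k} / (1 - δ_k))`. -/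
def alphaRIP {m n : ℕ} (A : Matrix (Fin m) (Fin n) ℝ) (k : ℕ) : ℝ :=
  ripConst A (2 * k + 1) * (1 + ripConst A (2 * k) / (1 - ripConst A k))

/-- `γ_k^RIP = 1 + δ_{2k+1} √(1+δ_k) / (1 - δ_k)`. -/
def gammaRIP {m n : ℕ} (A : Matrix (Fin m) (Fin n) ℝ) (k : ℕ) : ℝ :=
  1 + ripConst A (2 * k + 1) * Real.sqrt (1 + ripConst A k) / (1 - ripConst A k)

lemma ripSet_nonempty' {m n : ℕ} (A : Matrix (Fin m) (Fin n) ℝ) (l : ℕ) :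
    {δ : ℝ | 0 ≤ δ ∧ ∀ x : Fin n → ℝ, (spt x).card ≤ l →
      (1 - δ) * ∑ i, (x i) ^ 2 ≤ ∑ j, (A.mulVec x j) ^ 2 ∧
      ∑ j, (A.mulVec x j) ^ 2 ≤ (1 + δ) * ∑ i, (x i) ^ 2}.Nonempty := by
  refine ⟨1 + ∑ j, ∑ i, (A j i)^2, by positivity, fun x _ => ⟨?_, ?_⟩⟩
  · have h1 : (1 - (1 + ∑ j, ∑ i, (A j i)^2)) ≤ 0 := by
      have : (0:ℝ) ≤ ∑ j, ∑ i, (A j i)^2 := by positivity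
      linarith
    have h2 : (1 - (1 + ∑ j, ∑ i, (A j i)^2)) * ∑ i, (x i)^2 ≤ 0 :=
      mul_nonpos_of_nonpos_of_nonneg h1 (by positivity)
    exact h2.trans (by positivity)
  · have hpt : ∀ j, (A.mulVec x j)^2 ≤ (∑ i, (A j i)^2) * ∑ i, (x i)^2 := by
      intro j
      have := Finset.sum_mul_sq_le_sq_mul_sq Finset.univ (fun i => A j i) x
      simpa [Matrix.mulVec, dotProduct] using this
    calc ∑ j, (A.mulVec x j)^2 ≤ ∑ j, (∑ i, (A j i)^2) * ∑ i, (x i)^2 :=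
          Finset.sum_le_sum fun j _ => hpt j
      _ = (∑ j, ∑ i, (A j i)^2) * ∑ i, (x i)^2 := by rw [Finset.sum_mul]
      _ ≤ (1 + (1 + ∑ j, ∑ i, (A j i)^2)) * ∑ i, (x i)^2 := by
          have : (0:ℝ) ≤ ∑ i, (x i)^2 := by positivity
          nlinarith

lemma ripConst_nonneg {m n : ℕ} (A : Matrix (Fin m) (Fin n) ℝ) (l : ℕ) :
    0 ≤ ripConst A l :=
  le_csInf (ripSet_nonempty' A l) (fun _ hb => hb.1)

lemma ripConst_mono {m n : ℕ} (A : Matrix (Fin m) (Fin n) ℝ) {l l' : ℕ} (h : l ≤ l') :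
    ripConst A l ≤ ripConst A l' := by
  apply csInf_le_csInf ⟨0, fun δ hδ => hδ.1⟩ (ripSet_nonempty' A l')
  intro δ hδ
  exact ⟨hδ.1, fun x hx => hδ.2 x (hx.trans h)⟩

set_option maxHeartbeats 1000000 in
/-- Existence of a vector with support `S*` satisfying the recovery condition
(RC_RIP) holds iff `α_k^RIP < (1/2) k^{−3/2}`; moreover, in that case any constant
vector on `S*` with large enough constant satisfies the recovery condition. -/
theorem recovery_condition_existence_iff {m n k : ℕ} (hm : 0 < m) (hk : 0 < k)
    (hkn : 2 * k + 1 ≤ n)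
    (A : Matrix (Fin m) (Fin n) ℝ) (hRIP : ripConst A (2 * k + 1) < 1)
    (hcols : ∀ j : Fin n, ∑ i, (A i j) ^ 2 = 1)
    (Sstar : Finset (Fin n)) (hcard : Sstar.card = k) (hSne : Sstar.Nonempty)
    (e : Fin m → ℝ) :
    ((∃ xstar : Fin n → ℝ, spt xstar = Sstar ∧
        gammaRIP A k * l2norm e <
          (Sstar.inf' hSne (fun i => |xstar i|)) / (2 * k) -
            alphaRIP A k * l2norm xstar) ↔
      alphaRIP A k < (1 / 2) * (k : ℝ) ^ (-(3 : ℝ) / 2)) ∧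
    (alphaRIP A k < (1 / 2) * (k : ℝ) ^ (-(3 : ℝ) / 2) →
      ∀ (c : ℝ) (xstar : Fin n → ℝ),
        (∀ i ∈ Sstar, xstar i = c) → (∀ i ∉ Sstar, xstar i = 0) →
        |c| > 2 * k * gammaRIP A k * l2norm e /
          (1 - 2 * (k : ℝ) ^ ((3 : ℝ) / 2) * alphaRIP A k) →
        gammaRIP A k * l2norm e <
          (Sstar.inf' hSne (fun i => |xstar i|)) / (2 * k) -
            alphaRIP A k * l2norm xstar) := by
  have hδ1nn : 0 ≤ ripConst A k := ripConst_nonneg A k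
  have hδ2nn : 0 ≤ ripConst A (2*k) := ripConst_nonneg A (2*k)
  have hδ3nn : 0 ≤ ripConst A (2*k+1) := ripConst_nonneg A (2*k+1)
  have h13 : ripConst A k ≤ ripConst A (2*k+1) := ripConst_mono A (by omega)
  have hδ1lt : ripConst A k < 1 := lt_of_le_of_lt h13 hRIP
  have hden : 0 < 1 - ripConst A k := by linarith
  have hα : 0 ≤ alphaRIP A k := by
    have hq : 0 ≤ ripConst A (2*k) / (1 - ripConst A k) := div_nonneg hδ2nn hden.le
    exact mul_nonneg hδ3nn (by linarith)
  have hγ : 1 ≤ gammaRIP A k := by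
    have : 0 ≤ ripConst A (2*k+1) * Real.sqrt (1 + ripConst A k) / (1 - ripConst A k) :=
      div_nonneg (mul_nonneg hδ3nn (Real.sqrt_nonneg _)) hden.le
    unfold gammaRIP; linarith
  have he : 0 ≤ l2norm e := Real.sqrt_nonneg _
  have hγe : 0 ≤ gammaRIP A k * l2norm e := mul_nonneg (by linarith) he
  have hkpos : (0:ℝ) < k := by exact_mod_cast hk
  set s := Real.sqrt k with hs_def
  have hspos : 0 < s := Real.sqrt_pos.mpr hkpos
  have hs2 : s^2 = k := Real.sq_sqrt hkpos.le
  have hk32 : (k:ℝ) ^ ((3:ℝ)/2) = k * s := by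
    rw [show ((3:ℝ)/2) = 1 + 1/2 by norm_num, Real.rpow_add hkpos, Real.rpow_one,
      hs_def, Real.sqrt_eq_rpow]
  have hkneg32 : (k:ℝ) ^ (-(3:ℝ)/2) = 1 / (k * s) := by
    rw [show (-(3:ℝ)/2) = -((3:ℝ)/2) by ring, Real.rpow_neg hkpos.le, hk32, one_div]
  have hDpos : alphaRIP A k < (1/2) * (k:ℝ) ^ (-(3:ℝ)/2) →
      0 < 1 - 2 * (k:ℝ) ^ ((3:ℝ)/2) * alphaRIP A k := by
    intro hαlt
    rw [hkneg32] at hαlt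
    rw [hk32]
    have h1 : alphaRIP A k * (2*(k*s)) < ((1/2) * (1/(k*s))) * (2*(k*s)) :=
      mul_lt_mul_of_pos_right hαlt (by positivity)
    have h2 : ((1/2) * (1/(k*s))) * (2*(k*s)) = 1 := by field_simp
    nlinarith
  -- second (main) part
  have key : alphaRIP A k < (1/2) * (k:ℝ) ^ (-(3:ℝ)/2) →
      ∀ (c : ℝ) (xstar : Fin n → ℝ),
        (∀ i ∈ Sstar, xstar i = c) → (∀ i ∉ Sstar, xstar i = 0) →
        |c| > 2 * k * gammaRIP A k * l2norm e /
          (1 - 2 * (k:ℝ) ^ ((3:ℝ)/2) * alphaRIP A k) →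
        gammaRIP A k * l2norm e <
          (Sstar.inf' hSne (fun i => |xstar i|)) / (2 * k) -
            alphaRIP A k * l2norm xstar := by
    intro hαlt c xstar hOn hOff hc
    have hD := hDpos hαlt
    have hcD : 2 * k * gammaRIP A k * l2norm e <
        |c| * (1 - 2 * (k:ℝ) ^ ((3:ℝ)/2) * alphaRIP A k) := (div_lt_iff₀ hD).mp hc
    rw [hk32] at hcD
    have hinf : Sstar.inf' hSne (fun i => |xstar i|) = |c| := by
      rw [Finset.inf'_congr hSne rfl (g := fun _ => |c|) (fun i hi => by rw [hOn i hi]),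
        Finset.inf'_const]
    have hsum : ∑ i, (xstar i)^2 = k * c^2 := by
      rw [← Finset.sum_subset (Finset.subset_univ Sstar)
        (fun i _ hi => by rw [hOff i hi]; ring),
        Finset.sum_congr rfl (fun i hi => by rw [hOn i hi]),
        Finset.sum_const, hcard, nsmul_eq_mul]
    have hl2 : l2norm xstar = s * |c| := by
      unfold l2norm
      rw [hsum, show (k:ℝ) * c^2 = s^2 * c^2 by rw [hs2],
        Real.sqrt_mul (sq_nonneg s), Real.sqrt_sq hspos.le, Real.sqrt_sq_eq_abs]
    rw [hinf, hl2]
    rw [lt_sub_iff_add_lt, lt_div_iff₀ (show (0:ℝ) < 2*k by positivity)]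
    nlinarith [abs_nonneg c, hcD]
  refine ⟨⟨?_, ?_⟩, key⟩
  · -- forward direction
    rintro ⟨x, hspt, hlt⟩
    set M := Sstar.inf' hSne (fun i => |x i|) with hM_def
    set L := l2norm x with hL_def
    have hMpos : 0 < M := by
      rw [hM_def, Finset.lt_inf'_iff]
      intro i hi
      have : x i ≠ 0 := by
        have : i ∈ spt x := hspt ▸ hi
        simpa [spt] using this
      exact abs_pos.mpr this
    have hsum_ge : (k:ℝ) * M^2 ≤ ∑ i, (x i)^2 := by
      have h1 : ∑ i ∈ Sstar, M^2 ≤ ∑ i ∈ Sstar, (x i)^2 := by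
        apply Finset.sum_le_sum
        intro i hi
        have hMle : M ≤ |x i| := Finset.inf'_le _ hi
        calc M^2 ≤ |x i|^2 := by nlinarith
          _ = (x i)^2 := sq_abs _
      have h2 : ∑ i ∈ Sstar, (x i)^2 ≤ ∑ i, (x i)^2 :=
        Finset.sum_le_sum_of_subset_of_nonneg (Finset.subset_univ _)
          (fun i _ _ => sq_nonneg _)
      calc (k:ℝ) * M^2 = ∑ _i ∈ Sstar, M^2 := by
            rw [Finset.sum_const, hcard, nsmul_eq_mul]
        _ ≤ _ := h1.trans h2
    have hL_ge : s * M ≤ L := by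
      have : Real.sqrt ((k:ℝ) * M^2) ≤ Real.sqrt (∑ i, (x i)^2) :=
        Real.sqrt_le_sqrt hsum_ge
      rwa [show (k:ℝ) * M^2 = (s*M)^2 by rw [← hs2]; ring,
        Real.sqrt_sq (by positivity)] at this
    have hLpos : 0 < L := lt_of_lt_of_le (by positivity) hL_ge
    have h1 : alphaRIP A k * L < M / (2*k) := by linarith
    have h3 : alphaRIP A k * L * (2*k*s) < L := by
      calc alphaRIP A k * L * (2*k*s) < (M / (2*k)) * (2*k*s) :=
            mul_lt_mul_of_pos_right h1 (by positivity)
        _ = M * s := by field_simp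
        _ ≤ L := by linarith
    have h4 : alphaRIP A k * (2*k*s) < 1 := by
      by_contra h
      push_neg at h
      nlinarith
    rw [hkneg32, show (1:ℝ)/2 * (1/(k*s)) = 1/(2*(k*s)) by ring,
      lt_div_iff₀ (by positivity : (0:ℝ) < 2*(k*s))]
    nlinarith
  · -- reverse direction
    intro hαlt
    have hD := hDpos hαlt
    set b := 2 * k * gammaRIP A k * l2norm e /
      (1 - 2 * (k:ℝ) ^ ((3:ℝ)/2) * alphaRIP A k) with hb_def
    have hb_nn : 0 ≤ b := div_nonneg (by positivity) hD.le
    set c := b + 1 with hc_def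
    have hcpos : 0 < c := by linarith
    refine ⟨fun i => if i ∈ Sstar then c else 0, ?_, ?_⟩
    · ext i
      simp only [spt, Finset.mem_filter, Finset.mem_univ, true_and]
      by_cases hi : i ∈ Sstar <;> simp [hi, hcpos.ne']
    · exact key hαlt c _ (fun i hi => if_pos hi) (fun i hi => if_neg hi)
        (by rw [abs_of_pos hcpos]; linarith)

end
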